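/- arXiv:1212.5871 — 6 statements merged into one kernel-verified Lean document; each statement's English description precedes it below -/
import Mathlib

section
/- Let b_1,b_2,b_3,b_4,c_1,c_2,c_3,c_4 be variables with symplectic form ω = Σ_{j=1}^4 db_j ∧ dc_j, subject to the constraint b_2(c_2 - c_1) + b_4(c_4 - c_3) + ρ_3 = 0 for a constant ρ_3 (with c_4 ≠ c_3). Then on the constraint locus, ω = d(b_1+b_2) ∧ dc_1 + d(b_2(c_4-c_3)) ∧ d((c_2-c_1)/(c_4-c_3)) + d(b_3+b_4) ∧ dc_3. -/
/-- On the constraint locus `b₂(c₂-c₁) + b₄(c₄-c₃) + ρ₃ = 0` (with `c₄ ≠ c₃`),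
the symplectic form `ω = Σ dbⱼ ∧ dcⱼ` equals
`d(b₁+b₂) ∧ dc₁ + d(b₂(c₄-c₃)) ∧ d((c₂-c₁)/(c₄-c₃)) + d(b₃+b₄) ∧ dc₃`.
The 2-form identity is expressed by pairing with two arbitrary derivations
`D₁, D₂` tangent to the constraint locus. -/
theorem symplectic_reduction_21_21_21_21_111
    {K : Type*} [Field K] (b1 b2 b3 b4 c1 c2 c3 c4 ρ3 : K)
    (D1 D2 : K → K)
    (hD1add : ∀ x y, D1 (x + y) = D1 x + D1 y)
    (hD1mul : ∀ x y, D1 (x * y) = x * D1 y + D1 x * y)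
    (hD2add : ∀ x y, D2 (x + y) = D2 x + D2 y)
    (hD2mul : ∀ x y, D2 (x * y) = x * D2 y + D2 x * y)
    (hD1ρ : D1 ρ3 = 0) (hD2ρ : D2 ρ3 = 0)
    (hne : c4 ≠ c3)
    (hcon : b2 * (c2 - c1) + b4 * (c4 - c3) + ρ3 = 0)
    (htan1 : D1 (b2 * (c2 - c1) + b4 * (c4 - c3) + ρ3) = 0)
    (htan2 : D2 (b2 * (c2 - c1) + b4 * (c4 - c3) + ρ3) = 0) :
    (fun x y => D1 x * D2 y - D2 x * D1 y) b1 c1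
      + (fun x y => D1 x * D2 y - D2 x * D1 y) b2 c2
      + (fun x y => D1 x * D2 y - D2 x * D1 y) b3 c3
      + (fun x y => D1 x * D2 y - D2 x * D1 y) b4 c4
    = (fun x y => D1 x * D2 y - D2 x * D1 y) (b1 + b2) c1
      + (fun x y => D1 x * D2 y - D2 x * D1 y) (b2 * (c4 - c3)) ((c2 - c1) / (c4 - c3))
      + (fun x y => D1 x * D2 y - D2 x * D1 y) (b3 + b4) c3 := by
  have hne' : c4 - c3 ≠ 0 := sub_ne_zero.mpr hne
  -- subtraction rules
  have hD1sub : ∀ x y : K, D1 (x - y) = D1 x - D1 y := by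
    intro x y
    have h := hD1add (x - y) y
    rw [sub_add_cancel] at h
    linear_combination -h
  have hD2sub : ∀ x y : K, D2 (x - y) = D2 x - D2 y := by
    intro x y
    have h := hD2add (x - y) y
    rw [sub_add_cancel] at h
    linear_combination -h
  -- quotient rule for q := (c2-c1)/(c4-c3)
  have he : (c2 - c1) = ((c2 - c1) / (c4 - c3)) * (c4 - c3) := (div_mul_cancel₀ _ hne').symm
  have hq1 : D1 ((c2 - c1) / (c4 - c3))
      = ((D1 c2 - D1 c1) - ((c2 - c1) / (c4 - c3)) * (D1 c4 - D1 c3)) / (c4 - c3) := by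
    have h := congrArg D1 he
    rw [hD1mul, hD1sub, hD1sub] at h
    rw [eq_div_iff hne']
    linear_combination -h
  have hq2 : D2 ((c2 - c1) / (c4 - c3))
      = ((D2 c2 - D2 c1) - ((c2 - c1) / (c4 - c3)) * (D2 c4 - D2 c3)) / (c4 - c3) := by
    have h := congrArg D2 he
    rw [hD2mul, hD2sub, hD2sub] at h
    rw [eq_div_iff hne']
    linear_combination -h
  -- expanded tangency
  rw [hD1add, hD1add, hD1mul, hD1mul, hD1sub, hD1sub, hD1ρ] at htan1
  rw [hD2add, hD2add, hD2mul, hD2mul, hD2sub, hD2sub, hD2ρ] at htan2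
  simp only []
  rw [hD1add, hD2add, hD1add, hD2add, hD1mul, hD2mul, hD1sub, hD2sub, hq1, hq2]
  field_simp
  linear_combination ((D2 c4 - D2 c3) * (c4 - c3)) * htan1 - ((D1 c4 - D1 c3) * (c4 - c3)) * htan2
end

section
/- Let b_1,...,b_4, c_1,...,c_4 be variables with ω = Σ_{j=1}^4 db_j ∧ dc_j, subject to the constraint b_1 c_1 + b_2 c_2 + b_3(c_3+1) + b_4(c_4+1) + κ = 0 for a constant κ (with c_4 ≠ -1). Then on the constraint locus, ω = d(b_1(c_4+1)) ∧ d(c_1/(c_4+1)) + d(b_2(c_4+1)) ∧ d(c_2/(c_4+1)) + d(b_3(c_4+1)) ∧ d((c_3+1)/(c_4+1)). -/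
/-- On the constraint locus `b₁c₁ + b₂c₂ + b₃(c₃+1) + b₄(c₄+1) + κ = 0`
(with `c₄ ≠ -1`), the symplectic form `ω = Σ dbⱼ ∧ dcⱼ` equals
`d(b₁(c₄+1)) ∧ d(c₁/(c₄+1)) + d(b₂(c₄+1)) ∧ d(c₂/(c₄+1))
 + d(b₃(c₄+1)) ∧ d((c₃+1)/(c₄+1))`, expressed via arbitrary tangent
derivations `D₁, D₂`. -/
theorem symplectic_reduction_21_111_111_111
    {K : Type*} [Field K] (b1 b2 b3 b4 c1 c2 c3 c4 κ : K)
    (D1 D2 : K → K)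
    (hD1add : ∀ x y, D1 (x + y) = D1 x + D1 y)
    (hD1mul : ∀ x y, D1 (x * y) = x * D1 y + D1 x * y)
    (hD2add : ∀ x y, D2 (x + y) = D2 x + D2 y)
    (hD2mul : ∀ x y, D2 (x * y) = x * D2 y + D2 x * y)
    (hD1κ : D1 κ = 0) (hD2κ : D2 κ = 0)
    (hne : c4 ≠ -1)
    (hcon : b1 * c1 + b2 * c2 + b3 * (c3 + 1) + b4 * (c4 + 1) + κ = 0)
    (htan1 : D1 (b1 * c1 + b2 * c2 + b3 * (c3 + 1) + b4 * (c4 + 1) + κ) = 0)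
    (htan2 : D2 (b1 * c1 + b2 * c2 + b3 * (c3 + 1) + b4 * (c4 + 1) + κ) = 0) :
    (fun x y => D1 x * D2 y - D2 x * D1 y) b1 c1
      + (fun x y => D1 x * D2 y - D2 x * D1 y) b2 c2
      + (fun x y => D1 x * D2 y - D2 x * D1 y) b3 c3
      + (fun x y => D1 x * D2 y - D2 x * D1 y) b4 c4
    = (fun x y => D1 x * D2 y - D2 x * D1 y) (b1 * (c4 + 1)) (c1 / (c4 + 1))
      + (fun x y => D1 x * D2 y - D2 x * D1 y) (b2 * (c4 + 1)) (c2 / (c4 + 1))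
      + (fun x y => D1 x * D2 y - D2 x * D1 y) (b3 * (c4 + 1)) ((c3 + 1) / (c4 + 1)) := by
  have hu : c4 + 1 ≠ 0 := fun h => hne (by linear_combination h)
  have hD1one : D1 1 = 0 := by have := hD1mul 1 1; simpa using this
  have hD2one : D2 1 = 0 := by have := hD2mul 1 1; simpa using this
  -- expanded tangency
  simp only [hD1add, hD1mul, hD1κ, hD1one] at htan1
  simp only [hD2add, hD2mul, hD2κ, hD2one] at htan2
  -- product rule for b_i * (c4+1)
  have hp1 : D1 (b1 * (c4 + 1)) = b1 * D1 c4 + D1 b1 * (c4 + 1) := by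
    rw [hD1mul, hD1add, hD1one]; ring
  have hp2 : D1 (b2 * (c4 + 1)) = b2 * D1 c4 + D1 b2 * (c4 + 1) := by
    rw [hD1mul, hD1add, hD1one]; ring
  have hp3 : D1 (b3 * (c4 + 1)) = b3 * D1 c4 + D1 b3 * (c4 + 1) := by
    rw [hD1mul, hD1add, hD1one]; ring
  have hP1 : D2 (b1 * (c4 + 1)) = b1 * D2 c4 + D2 b1 * (c4 + 1) := by
    rw [hD2mul, hD2add, hD2one]; ring
  have hP2 : D2 (b2 * (c4 + 1)) = b2 * D2 c4 + D2 b2 * (c4 + 1) := by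
    rw [hD2mul, hD2add, hD2one]; ring
  have hP3 : D2 (b3 * (c4 + 1)) = b3 * D2 c4 + D2 b3 * (c4 + 1) := by
    rw [hD2mul, hD2add, hD2one]; ring
  -- quotient rule
  have hq : ∀ x : K, D1 (x / (c4 + 1)) * (c4 + 1) ^ 2 = D1 x * (c4 + 1) - x * D1 c4 := by
    intro x
    have h := congrArg D1 (div_mul_cancel₀ x hu)
    rw [hD1mul, hD1add, hD1one] at h
    field_simp at h
    linear_combination h
  have hr : ∀ x : K, D2 (x / (c4 + 1)) * (c4 + 1) ^ 2 = D2 x * (c4 + 1) - x * D2 c4 := by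
    intro x
    have h := congrArg D2 (div_mul_cancel₀ x hu)
    rw [hD2mul, hD2add, hD2one] at h
    field_simp at h
    linear_combination h
  have hq1 := hq c1; have hq2 := hq c2; have hq3 := hq (c3+1)
  have hr1 := hr c1; have hr2 := hr c2; have hr3 := hr (c3+1)
  have hq3' : D1 (c3 + 1) = D1 c3 := by rw [hD1add, hD1one, add_zero]
  have hr3' : D2 (c3 + 1) = D2 c3 := by rw [hD2add, hD2one, add_zero]
  rw [hq3'] at hq3; rw [hr3'] at hr3
  beta_reduce
  apply mul_left_cancel₀ (pow_ne_zero 2 hu)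
  rw [hp1, hp2, hp3, hP1, hP2, hP3]
  linear_combination (D2 c4 * (c4+1)) * htan1 - (D1 c4 * (c4+1)) * htan2
    + (b1 * D2 c4 + D2 b1 * (c4+1)) * hq1 + (b2 * D2 c4 + D2 b2 * (c4+1)) * hq2
    + (b3 * D2 c4 + D2 b3 * (c4+1)) * hq3
    - (b1 * D1 c4 + D1 b1 * (c4+1)) * hr1 - (b2 * D1 c4 + D1 b2 * (c4+1)) * hr2
    - (b3 * D1 c4 + D1 b3 * (c4+1)) * hr3
end

section
/- Let b_1,...,b_4, c_1,...,c_4 be variables with ω = Σ_{j=1}^4 db_j ∧ dc_j, subject to the constraint b_3(c_3 - c_2) + b_4(c_4 - 1) + ρ_4 = 0 for a constant ρ_4 (with c_4 ≠ 1). Then on the constraint locus, ω = db_1 ∧ dc_1 + d(b_2+b_3) ∧ dc_2 + d(b_3(c_4-1)) ∧ d((c_3-c_2)/(c_4-1)). -/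
/-- On the constraint locus `b₃(c₃-c₂) + b₄(c₄-1) + ρ₄ = 0` (with `c₄ ≠ 1`),
the symplectic form `ω = Σ dbⱼ ∧ dcⱼ` equals
`db₁ ∧ dc₁ + d(b₂+b₃) ∧ dc₂ + d(b₃(c₄-1)) ∧ d((c₃-c₂)/(c₄-1))`,
expressed via arbitrary tangent derivations `D₁, D₂`. -/
theorem symplectic_reduction_31_22_211_1111
    {K : Type*} [Field K] (b1 b2 b3 b4 c1 c2 c3 c4 ρ4 : K)
    (D1 D2 : K → K)
    (hD1add : ∀ x y, D1 (x + y) = D1 x + D1 y)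
    (hD1mul : ∀ x y, D1 (x * y) = x * D1 y + D1 x * y)
    (hD2add : ∀ x y, D2 (x + y) = D2 x + D2 y)
    (hD2mul : ∀ x y, D2 (x * y) = x * D2 y + D2 x * y)
    (hD1ρ : D1 ρ4 = 0) (hD2ρ : D2 ρ4 = 0)
    (hne : c4 ≠ 1)
    (hcon : b3 * (c3 - c2) + b4 * (c4 - 1) + ρ4 = 0)
    (htan1 : D1 (b3 * (c3 - c2) + b4 * (c4 - 1) + ρ4) = 0)
    (htan2 : D2 (b3 * (c3 - c2) + b4 * (c4 - 1) + ρ4) = 0) :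
    (fun x y => D1 x * D2 y - D2 x * D1 y) b1 c1
      + (fun x y => D1 x * D2 y - D2 x * D1 y) b2 c2
      + (fun x y => D1 x * D2 y - D2 x * D1 y) b3 c3
      + (fun x y => D1 x * D2 y - D2 x * D1 y) b4 c4
    = (fun x y => D1 x * D2 y - D2 x * D1 y) b1 c1
      + (fun x y => D1 x * D2 y - D2 x * D1 y) (b2 + b3) c2
      + (fun x y => D1 x * D2 y - D2 x * D1 y) (b3 * (c4 - 1)) ((c3 - c2) / (c4 - 1)) := by
  have hd : c4 - 1 ≠ 0 := sub_ne_zero.mpr hne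
  -- D 1 = 0
  have h1one : D1 1 = 0 := by
    have h := hD1mul 1 1
    rw [one_mul, one_mul, mul_one] at h
    exact (right_eq_add.mp h)
  have h2one : D2 1 = 0 := by
    have h := hD2mul 1 1
    rw [one_mul, one_mul, mul_one] at h
    exact (right_eq_add.mp h)
  -- D (x - y) = D x - D y
  have hD1sub : ∀ x y, D1 (x - y) = D1 x - D1 y := by
    intro x y
    have h := hD1add (x - y) y
    rw [sub_add_cancel] at h
    exact eq_sub_of_add_eq h.symm
  have hD2sub : ∀ x y, D2 (x - y) = D2 x - D2 y := by
    intro x y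
    have h := hD2add (x - y) y
    rw [sub_add_cancel] at h
    exact eq_sub_of_add_eq h.symm
  -- expand the tangency conditions
  rw [hD1add, hD1add, hD1mul, hD1mul, hD1ρ, hD1sub, hD1sub, h1one] at htan1
  rw [hD2add, hD2add, hD2mul, hD2mul, hD2ρ, hD2sub, hD2sub, h2one] at htan2
  -- quotient rule relations
  have hq : (c3 - c2) / (c4 - 1) * (c4 - 1) = c3 - c2 := div_mul_cancel₀ _ hd
  have hu1 : D1 ((c3 - c2) / (c4 - 1)) * (c4 - 1)
      = D1 c3 - D1 c2 - (c3 - c2) / (c4 - 1) * D1 c4 := by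
    have h := congrArg D1 hq
    rw [hD1mul, hD1sub, hD1sub, h1one] at h
    linear_combination h
  have hu2 : D2 ((c3 - c2) / (c4 - 1)) * (c4 - 1)
      = D2 c3 - D2 c2 - (c3 - c2) / (c4 - 1) * D2 c4 := by
    have h := congrArg D2 hq
    rw [hD2mul, hD2sub, hD2sub, h2one] at h
    linear_combination h
  simp only []
  rw [hD1add b2 b3, hD2add b2 b3, hD1mul b3 (c4 - 1), hD2mul b3 (c4 - 1),
    hD1sub c4 1, hD2sub c4 1, h1one, h2one]
  apply mul_right_cancel₀ hd
  linear_combination D2 c4 * htan1 - D1 c4 * htan2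
    + (D1 b3 * D2 c4 - D2 b3 * D1 c4) * hq
    - (b3 * D1 c4 + D1 b3 * (c4 - 1)) * hu2
    + (b3 * D2 c4 + D2 b3 * (c4 - 1)) * hu1
end

section
/- The map (λ_1, μ_1, λ_2, μ_2, λ_3, μ_3) ↦ (q_1, p_1, q_2, p_2, q_3, p_3) defined by q_1/t = 1/λ_1, t p_1 = -λ_1(λ_1 μ_1 - λ_3 μ_3 + κ), q_2/t = λ_2, t p_2 = μ_2, q_3/t = λ_1 λ_3, t p_3 = μ_3/λ_1 (for a constant κ and fixed nonzero parameter t, on the open set λ_1 ≠ 0) is a canonical transformation: Σ_{j=1}^3 dλ_j ∧ dμ_j = Σ_{j=1}^3 dq_j ∧ dp_j. -/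
section Aux

variable {K : Type*} [Field K] (D : K → K)
  (hadd : ∀ x y, D (x + y) = D x + D y)
  (hmul : ∀ x y, D (x * y) = x * D y + D x * y)

include hadd in
theorem derAux_zero : D 0 = 0 := by
  have h := hadd 0 0
  simp only [add_zero] at h
  linear_combination -h

include hadd in
theorem derAux_neg (x : K) : D (-x) = -D x := by
  have h := hadd x (-x)
  rw [add_neg_cancel, derAux_zero D hadd] at h
  linear_combination -h

include hadd in
theorem derAux_sub (x y : K) : D (x - y) = D x - D y := by
  rw [sub_eq_add_neg, hadd, derAux_neg D hadd]
  ring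

include hmul in
theorem derAux_one : D 1 = 0 := by
  have h := hmul 1 1
  simp only [one_mul, mul_one] at h
  linear_combination -h

include hmul in
theorem derAux_inv (x : K) (hx : x ≠ 0) : D x⁻¹ = -D x / (x * x) := by
  have h := hmul x x⁻¹
  rw [mul_inv_cancel₀ hx, derAux_one D hmul] at h
  have hxx : x * x ≠ 0 := mul_ne_zero hx hx
  rw [eq_div_iff hxx]
  linear_combination -x * h - D x * mul_inv_cancel₀ hx

include hadd hmul in
theorem derAux_div (x y : K) (hy : y ≠ 0) :
    D (x / y) = (D x * y - x * D y) / (y * y) := by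
  rw [div_eq_mul_inv, hmul, derAux_inv D hmul y hy]
  field_simp
  ring

end Aux

/-- The transformation `q₁/t = 1/λ₁`, `t p₁ = -λ₁(λ₁μ₁ - λ₃μ₃ + κ)`,
`q₂/t = λ₂`, `t p₂ = μ₂`, `q₃/t = λ₁λ₃`, `t p₃ = μ₃/λ₁` (for constants `κ`, `t`
with `t ≠ 0`, on the open set `λ₁ ≠ 0`) is canonical:
`Σ dλⱼ ∧ dμⱼ = Σ dqⱼ ∧ dpⱼ`, expressed by pairing with two arbitrary
derivations `D₁, D₂` annihilating the constants. -/
theorem canonical_transformation_31_22_211_1111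
    {K : Type*} [Field K] (l1 m1 l2 m2 l3 m3 κ t : K)
    (D1 D2 : K → K)
    (hD1add : ∀ x y, D1 (x + y) = D1 x + D1 y)
    (hD1mul : ∀ x y, D1 (x * y) = x * D1 y + D1 x * y)
    (hD2add : ∀ x y, D2 (x + y) = D2 x + D2 y)
    (hD2mul : ∀ x y, D2 (x * y) = x * D2 y + D2 x * y)
    (hD1κ : D1 κ = 0) (hD2κ : D2 κ = 0)
    (hD1t : D1 t = 0) (hD2t : D2 t = 0)
    (ht : t ≠ 0) (hl1 : l1 ≠ 0) :
    (fun x y => D1 x * D2 y - D2 x * D1 y) l1 m1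
      + (fun x y => D1 x * D2 y - D2 x * D1 y) l2 m2
      + (fun x y => D1 x * D2 y - D2 x * D1 y) l3 m3
    = (fun x y => D1 x * D2 y - D2 x * D1 y) (t / l1)
        (-(l1 * (l1 * m1 - l3 * m3 + κ)) / t)
      + (fun x y => D1 x * D2 y - D2 x * D1 y) (t * l2) (m2 / t)
      + (fun x y => D1 x * D2 y - D2 x * D1 y) (t * l1 * l3) (m3 / (l1 * t)) := by
  simp only
  have hl1t : l1 * t ≠ 0 := mul_ne_zero hl1 ht
  have key : ∀ (D : K → K), (∀ x y, D (x + y) = D x + D y) →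
      (∀ x y, D (x * y) = x * D y + D x * y) → D κ = 0 → D t = 0 →
      D (t / l1) = (- t * D l1) / (l1 * l1) ∧
      D (-(l1 * (l1 * m1 - l3 * m3 + κ)) / t)
        = -(l1 * (l1 * D m1 + D l1 * m1 - (l3 * D m3 + D l3 * m3))
            + D l1 * (l1 * m1 - l3 * m3 + κ)) / t ∧
      D (t * l2) = t * D l2 ∧
      D (m2 / t) = D m2 / t ∧
      D (t * l1 * l3) = t * (l1 * D l3 + D l1 * l3) ∧
      D (m3 / (l1 * t)) = (D m3 * (l1 * t) - m3 * (t * D l1)) / (l1 * t * (l1 * t)) := by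
    intro D hadd hmul hκ hts
    refine ⟨?_, ?_, ?_, ?_, ?_, ?_⟩
    · rw [derAux_div D hadd hmul _ l1 hl1, hts]; ring
    · rw [derAux_div D hadd hmul _ t ht, hts, derAux_neg D hadd, hmul,
        hadd, derAux_sub D hadd, hmul, hmul, hκ, mul_zero, sub_zero,
        div_eq_div_iff (mul_ne_zero ht ht) ht]
      ring
    · rw [hmul, hts]; ring
    · rw [derAux_div D hadd hmul _ t ht, hts, mul_zero, sub_zero,
        div_eq_div_iff (mul_ne_zero ht ht) ht]; ring
    · rw [hmul, hmul, hts]; ring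
    · rw [derAux_div D hadd hmul _ (l1*t) hl1t, hmul, hts]; ring
  obtain ⟨e1, e2, e3, e4, e5, e6⟩ := key D1 hD1add hD1mul hD1κ hD1t
  obtain ⟨f1, f2, f3, f4, f5, f6⟩ := key D2 hD2add hD2mul hD2κ hD2t
  rw [e1, e2, e3, e4, e5, e6, f1, f2, f3, f4, f5, f6]
  field_simp
  ring_nf
end

section
/- For the matrices of the rigid system (5.4): M_1 = [[α_1-α_5-ρ_4, -1, -1, -1], [α_1(α_1-η), -α_1-α_5+η-ρ_4, -α_1, -α_1+η], [-(α_1-η)(α_5+ρ_4)(η-ρ_4)/η, (α_5+ρ_4)(η-ρ_4)/η, η-ρ_4, 0], [-α_1(α_5-η+ρ_4)ρ_4/η, (α_5-η+ρ_4)ρ_4/η, 0, -ρ_4]] and M_0 = [[-α_0-α_1-α_2, 1, 1, 1], [0, -α_0, α_1, α_1-η], [0,0,0,0], [0,0,0,0]], the characteristic polynomial of M_0 is λ²(λ+α_0)(λ+α_0+α_1+α_2), and the characteristic polynomial of M_1 is λ²(λ+α_5-η+2ρ_4)² (i.e., M_1 has eigenvalue -α_5+η-2ρ_4 with multiplicity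 2 and eigenvalue 0 with multiplicity 2). -/
set_option maxHeartbeats 1000000

open Polynomial

lemma det_fin_four' (A : Matrix (Fin 4) (Fin 4) ℂ) :
  A.det =
    A 0 0 * (A 1 1*(A 2 2*A 3 3 - A 2 3*A 3 2) - A 1 2*(A 2 1*A 3 3 - A 2 3*A 3 1) + A 1 3*(A 2 1*A 3 2 - A 2 2*A 3 1))
  - A 0 1 * (A 1 0*(A 2 2*A 3 3 - A 2 3*A 3 2) - A 1 2*(A 2 0*A 3 3 - A 2 3*A 3 0) + A 1 3*(A 2 0*A 3 2 - A 2 2*A 3 0))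
  + A 0 2 * (A 1 0*(A 2 1*A 3 3 - A 2 3*A 3 1) - A 1 1*(A 2 0*A 3 3 - A 2 3*A 3 0) + A 1 3*(A 2 0*A 3 1 - A 2 1*A 3 0))
  - A 0 3 * (A 1 0*(A 2 1*A 3 2 - A 2 2*A 3 1) - A 1 1*(A 2 0*A 3 2 - A 2 2*A 3 0) + A 1 2*(A 2 0*A 3 1 - A 2 1*A 3 0)) := by
  simp [Matrix.det_succ_row_zero, Fin.sum_univ_succ, Fin.succAbove,
    show (Fin.succ 2 : Fin 4) = 3 from rfl, show (Fin.castSucc 2 : Fin 4) = 2 from rfl]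
  ring

lemma eval_charpoly_det (M : Matrix (Fin 4) (Fin 4) ℂ) (x : ℂ) :
    M.charpoly.eval x = ((Matrix.charmatrix M).map (eval x)).det := by
  rw [Matrix.charpoly, show (eval x : ℂ[X] → ℂ) = (evalRingHom x : ℂ[X] → ℂ) from rfl]
  rw [show (evalRingHom x) (Matrix.charmatrix M).det = _ from RingHom.map_det _ _]
  rfl

lemma charmatrix_map_eval (M : Matrix (Fin 4) (Fin 4) ℂ) (x : ℂ) (i j : Fin 4) :
    ((Matrix.charmatrix M).map (eval x)) i j = (if i = j then x else 0) - M i j := by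
  by_cases h : i = j
  · subst h; simp [Matrix.charmatrix_apply_eq]
  · simp [Matrix.charmatrix_apply_ne _ _ _ h, h]

lemma charpoly_eval_expl (a b c d e f g h i j k l m n o p x : ℂ) :
    (!![a,b,c,d;e,f,g,h;i,j,k,l;m,n,o,p] : Matrix (Fin 4) (Fin 4) ℂ).charpoly.eval x =
      ( (x-a)*(x-f)*(x-k)*(x-p)
 - (x-a)*(x-f)*(-l)*(-o)
 - (x-a)*(-g)*(-j)*(x-p)
 + (x-a)*(-g)*(-l)*(-n)
 + (x-a)*(-h)*(-j)*(-o)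
 - (x-a)*(-h)*(x-k)*(-n)
 - (-b)*(-e)*(x-k)*(x-p)
 + (-b)*(-e)*(-l)*(-o)
 + (-b)*(-g)*(-i)*(x-p)
 - (-b)*(-g)*(-l)*(-m)
 - (-b)*(-h)*(-i)*(-o)
 + (-b)*(-h)*(x-k)*(-m)
 + (-c)*(-e)*(-j)*(x-p)
 - (-c)*(-e)*(-l)*(-n)
 - (-c)*(x-f)*(-i)*(x-p)
 + (-c)*(x-f)*(-l)*(-m)
 + (-c)*(-h)*(-i)*(-n)
 - (-c)*(-h)*(-j)*(-m)
 - (-d)*(-e)*(-j)*(-o)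
 + (-d)*(-e)*(x-k)*(-n)
 + (-d)*(x-f)*(-i)*(-o)
 - (-d)*(x-f)*(x-k)*(-m)
 - (-d)*(-g)*(-i)*(-n)
 + (-d)*(-g)*(-j)*(-m) ) := by
  rw [eval_charpoly_det, det_fin_four']
  simp only [charmatrix_map_eval]
  simp +decide only [Matrix.cons_val_zero, Matrix.cons_val_one, Matrix.head_cons,
    Matrix.cons_val_two, Matrix.tail_cons, Matrix.cons_val_three, Matrix.cons_val',
    Matrix.empty_val', Matrix.cons_val_fin_one, Matrix.head_fin_const, Matrix.of_apply,
    if_true, if_false, reduceIte]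
  ring

/-- Spectral-type claim for the even-four rigid system `{22,211,1111}` of
Section 5.4: `charpoly M₀ = λ²(λ+α₀)(λ+α₀+α₁+α₂)` and
`charpoly M₁ = λ²(λ+α₅-η+2ρ₄)²`. -/
theorem spectral_type_22_211_1111 (α0 α1 α2 α5 η ρ4 : ℂ) (hη : η ≠ 0) :
    let M1 : Matrix (Fin 4) (Fin 4) ℂ :=
      !![α1 - α5 - ρ4, -1, -1, -1;
         α1 * (α1 - η), -α1 - α5 + η - ρ4, -α1, -α1 + η;
         -((α1 - η) * (α5 + ρ4) * (η - ρ4)) / η, ((α5 + ρ4) * (η - ρ4)) / η, η - ρ4, 0;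
         -(α1 * (α5 - η + ρ4) * ρ4) / η, ((α5 - η + ρ4) * ρ4) / η, 0, -ρ4]
    let M0 : Matrix (Fin 4) (Fin 4) ℂ :=
      !![-α0 - α1 - α2, 1, 1, 1;
         0, -α0, α1, α1 - η;
         0, 0, 0, 0;
         0, 0, 0, 0]
    M0.charpoly = X ^ 2 * (X + C α0) * (X + C (α0 + α1 + α2)) ∧
    M1.charpoly = X ^ 2 * (X + C (α5 - η + 2 * ρ4)) ^ 2 := by
  intro M1 M0
  constructor <;>
  · apply Polynomial.funext
    intro x
    simp only [M0, M1]
    rw [charpoly_eval_expl]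
    simp only [eval_mul, eval_pow, eval_add, eval_X, eval_C]
    field_simp
    ring_nf
    try (field_simp; ring)
end

section
/- Let λ_1, λ_3, λ_5, μ_1, μ_3, μ_5 be variables subject to the two constraints λ_1μ_1 + μ_1μ_5 - c = 0 and λ_1μ_1 - λ_3μ_3 - λ_5μ_5 - d = 0 (constants c, d; μ_1 ≠ 0, λ_3 ≠ 0). Then on the constraint locus, the 2-form dλ_1∧dμ_1 + dλ_3∧dμ_3 + dλ_5∧dμ_5 equals d(λ_3(λ_1 - c/μ_1)) ∧ d((μ_1+λ_5)/λ_3). -/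
section helpers
variable {K : Type*} [Field K] (D : K → K)

lemma der_one (hmul : ∀ x y, D (x * y) = x * D y + D x * y) : D 1 = 0 := by
  have h := hmul 1 1
  rw [one_mul, one_mul, mul_one] at h
  exact left_eq_add.mp h

lemma der_neg (hadd : ∀ x y, D (x + y) = D x + D y) (x : K) : D (-x) = -D x := by
  have h0 : D 0 = 0 := by
    have := hadd 0 0; simpa using this
  have h := hadd x (-x)
  rw [add_neg_cancel, h0] at h
  linear_combination -h

lemma der_sub (hadd : ∀ x y, D (x + y) = D x + D y) (x y : K) :
    D (x - y) = D x - D y := by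
  rw [sub_eq_add_neg, hadd, der_neg D hadd, sub_eq_add_neg]

lemma der_inv (hadd : ∀ x y, D (x + y) = D x + D y)
    (hmul : ∀ x y, D (x * y) = x * D y + D x * y) (x : K) (hx : x ≠ 0) :
    D x⁻¹ = -D x / x ^ 2 := by
  have h := hmul x x⁻¹
  rw [mul_inv_cancel₀ hx, der_one D hmul] at h
  have h' : x * (x * D x⁻¹ + D x * x⁻¹) = 0 := by rw [← h, mul_zero]
  rw [mul_add, ← mul_assoc, mul_left_comm x (D x) x⁻¹, mul_inv_cancel₀ hx, mul_one] at h'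
  rw [eq_div_iff (pow_ne_zero 2 hx)]
  linear_combination h'

end helpers

/-- On the locus cut out by the two constraints `λ₁μ₁ + μ₁μ₅ - c = 0` and
`λ₁μ₁ - λ₃μ₃ - λ₅μ₅ - d = 0` (with `μ₁ ≠ 0`, `λ₃ ≠ 0`), the 2-form
`dλ₁∧dμ₁ + dλ₃∧dμ₃ + dλ₅∧dμ₅` equals `d(λ₃(λ₁ - c/μ₁)) ∧ d((μ₁+λ₅)/λ₃)`,
expressed via arbitrary tangent derivations `D₁, D₂`. -/
theorem symplectic_reduction_42_33_33_222
    {K : Type*} [Field K] (l1 l3 l5 m1 m3 m5 c d : K)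
    (D1 D2 : K → K)
    (hD1add : ∀ x y, D1 (x + y) = D1 x + D1 y)
    (hD1mul : ∀ x y, D1 (x * y) = x * D1 y + D1 x * y)
    (hD2add : ∀ x y, D2 (x + y) = D2 x + D2 y)
    (hD2mul : ∀ x y, D2 (x * y) = x * D2 y + D2 x * y)
    (hD1c : D1 c = 0) (hD2c : D2 c = 0) (hD1d : D1 d = 0) (hD2d : D2 d = 0)
    (hm1 : m1 ≠ 0) (hl3 : l3 ≠ 0)
    (hcon1 : l1 * m1 + m1 * m5 - c = 0)
    (hcon2 : l1 * m1 - l3 * m3 - l5 * m5 - d = 0)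
    (htan11 : D1 (l1 * m1 + m1 * m5 - c) = 0)
    (htan12 : D2 (l1 * m1 + m1 * m5 - c) = 0)
    (htan21 : D1 (l1 * m1 - l3 * m3 - l5 * m5 - d) = 0)
    (htan22 : D2 (l1 * m1 - l3 * m3 - l5 * m5 - d) = 0) :
    (fun x y => D1 x * D2 y - D2 x * D1 y) l1 m1
      + (fun x y => D1 x * D2 y - D2 x * D1 y) l3 m3
      + (fun x y => D1 x * D2 y - D2 x * D1 y) l5 m5
    = (fun x y => D1 x * D2 y - D2 x * D1 y) (l3 * (l1 - c / m1))
        ((m1 + l5) / l3) := by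
  rw [der_sub D1 hD1add, hD1add, hD1mul, hD1mul, hD1c, sub_zero] at htan11
  rw [der_sub D2 hD2add, hD2add, hD2mul, hD2mul, hD2c, sub_zero] at htan12
  rw [der_sub D1 hD1add, der_sub D1 hD1add, der_sub D1 hD1add,
    hD1mul, hD1mul, hD1mul, hD1d, sub_zero] at htan21
  rw [der_sub D2 hD2add, der_sub D2 hD2add, der_sub D2 hD2add,
    hD2mul, hD2mul, hD2mul, hD2d, sub_zero] at htan22
  have hm12 : (m1 : K) ^ 2 ≠ 0 := pow_ne_zero 2 hm1
  have hl32 : (l3 : K) ^ 2 ≠ 0 := pow_ne_zero 2 hl3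
  have hDm5_1 : D1 m5 = -(D1 l1 * m1 ^ 2 + D1 m1 * c) / m1 ^ 2 := by
    rw [eq_div_iff hm12]; linear_combination m1 * htan11 - D1 m1 * hcon1
  have hDm5_2 : D2 m5 = -(D2 l1 * m1 ^ 2 + D2 m1 * c) / m1 ^ 2 := by
    rw [eq_div_iff hm12]; linear_combination m1 * htan12 - D2 m1 * hcon1
  have hDm3_1 : D1 m3 =
      ((l1 * D1 m1 + D1 l1 * m1) * l3 * m1 ^ 2
        - D1 l3 * m1 * (l1 * m1 ^ 2 - l5 * c + l5 * l1 * m1 - d * m1)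
        + l5 * l3 * (D1 l1 * m1 ^ 2 + D1 m1 * c)
        - D1 l5 * l3 * m1 * (c - l1 * m1)) / (l3 ^ 2 * m1 ^ 2) := by
    rw [eq_div_iff (mul_ne_zero hl32 hm12)]
    linear_combination (-l3 * m1 ^ 2) * htan21 + (D1 l3 * m1 ^ 2) * hcon2
      + (D1 l3 * l5 * m1 + l3 * l5 * D1 m1 - l3 * D1 l5 * m1) * hcon1
      + (-l3 * l5 * m1) * htan11
  have hDm3_2 : D2 m3 =
      ((l1 * D2 m1 + D2 l1 * m1) * l3 * m1 ^ 2
        - D2 l3 * m1 * (l1 * m1 ^ 2 - l5 * c + l5 * l1 * m1 - d * m1)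
        + l5 * l3 * (D2 l1 * m1 ^ 2 + D2 m1 * c)
        - D2 l5 * l3 * m1 * (c - l1 * m1)) / (l3 ^ 2 * m1 ^ 2) := by
    rw [eq_div_iff (mul_ne_zero hl32 hm12)]
    linear_combination (-l3 * m1 ^ 2) * htan22 + (D2 l3 * m1 ^ 2) * hcon2
      + (D2 l3 * l5 * m1 + l3 * l5 * D2 m1 - l3 * D2 l5 * m1) * hcon1
      + (-l3 * l5 * m1) * htan12
  have hX1 : D1 (l3 * (l1 - c / m1))
      = (D1 l3 * (l1 * m1 - c) * m1 + l3 * (D1 l1 * m1 ^ 2 + c * D1 m1)) / m1 ^ 2 := by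
    rw [hD1mul, der_sub D1 hD1add, div_eq_mul_inv c m1, hD1mul,
      der_inv D1 hD1add hD1mul m1 hm1, hD1c]
    field_simp
    ring
  have hX2 : D2 (l3 * (l1 - c / m1))
      = (D2 l3 * (l1 * m1 - c) * m1 + l3 * (D2 l1 * m1 ^ 2 + c * D2 m1)) / m1 ^ 2 := by
    rw [hD2mul, der_sub D2 hD2add, div_eq_mul_inv c m1, hD2mul,
      der_inv D2 hD2add hD2mul m1 hm1, hD2c]
    field_simp
    ring
  have hY1 : D1 ((m1 + l5) / l3)
      = ((D1 m1 + D1 l5) * l3 - (m1 + l5) * D1 l3) / l3 ^ 2 := by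
    rw [div_eq_mul_inv (m1 + l5) l3, hD1mul, hD1add,
      der_inv D1 hD1add hD1mul l3 hl3]
    field_simp
    ring
  have hY2 : D2 ((m1 + l5) / l3)
      = ((D2 m1 + D2 l5) * l3 - (m1 + l5) * D2 l3) / l3 ^ 2 := by
    rw [div_eq_mul_inv (m1 + l5) l3, hD2mul, hD2add,
      der_inv D2 hD2add hD2mul l3 hl3]
    field_simp
    ring
  simp only []
  rw [hX1, hX2, hY1, hY2, hDm3_1, hDm3_2, hDm5_1, hDm5_2]
  field_simp
  ring
end
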